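/- For n ≥ 3, there exists a quandle of cyclic type with n elements if and only if n is a power of a prime number. -/

import Mathlib

/-- The inner automorphism group of a quandle: the subgroup of permutations
generated by the maps `φ x : y ↦ x ◃ y`. -/
def Inn (X : Type*) [Quandle X] : Subgroup (Equiv.Perm X) :=
  Subgroup.closure (Set.range (fun x : X => Rack.act' x))


/-- A finite quandle is of cyclic type if each `φ x` is a cycle whose unique
fixed point is `x` (i.e. it acts as an `(n-1)`-cycle on `X \ {x}`). -/
def IsCyclicType (X : Type*) [Quandle X] : Prop :=
  ∀ x : X, Equiv.Perm.IsCycle (Rack.act' x) ∧ ∀ y : X, Rack.act' x y = y ↔ y = x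

/-!
If `X` is of cyclic type, `Inn X` acts sharply 2-transitively on `X`: an inner automorphism fixing
`x` commutes with the cycle `φ_x`, so if it also fixes some `y ≠ x` it fixes every `φ_x ^ i y`.

In a sharply 2-transitive action of degree `n`, every nontrivial element fixes at most one point,
so Burnside's lemma leaves exactly `n - 1` fixed-point-free elements. Conjugating one of them by
the stabiliser of `x` moves its value at `x` to any other point, so these conjugates exhaust the
fixed-point-free elements, which therefore all have the same order. An element of prime order
`p ∣ n` (Cauchy) is fixed-point-free, since point stabilisers have order `n - 1`. Hence `n` has a
single prime divisor.

Conversely, on `𝔽_q` the Alexander quandle `x ◃ y = (1 - α) x + α y` has `φ_x` conjugate, by a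
translation, to multiplication by `α`, which is a `(q - 1)`-cycle when `α` generates `𝔽_qˣ`.
-/

open MulAction Quandles

structure IsSharplyTwoTransitive (G X : Type*) [Group G] [MulAction G X] : Prop where
  exists_smul_eq_and_smul_eq {x y x' y' : X} :
    x ≠ y → x' ≠ y' → ∃ g : G, g • x = x' ∧ g • y = y'
  eq_one_of_smul_eq_self {g : G} {x y : X} : x ≠ y → g • x = x → g • y = y → g = 1

theorem Nat.card_subtype_ne {X : Type*} [Finite X] (x : X) :
    Nat.card {y // y ≠ x} = Nat.card X - 1 := by
  classical
  rw [← Nat.card_congr (Equiv.optionSubtypeNe x), Finite.card_option, Nat.add_sub_cancel]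

namespace IsSharplyTwoTransitive

variable {G X : Type*} [Group G] [MulAction G X] (h : IsSharplyTwoTransitive G X)
include h

theorem eq_of_smul_eq_smul {g g' : G} {x y : X} (hxy : x ≠ y) (hx : g • x = g' • x)
    (hy : g • y = g' • y) : g = g' := by
  rw [← inv_mul_eq_one]
  exact h.eq_one_of_smul_eq_self hxy (by rw [mul_smul, inv_smul_eq_iff, hx])
    (by rw [mul_smul, inv_smul_eq_iff, hy])

theorem finite [Finite X] [Nontrivial X] : Finite G := by
  obtain ⟨x, y, hxy⟩ := exists_pair_ne X
  exact Finite.of_injective (fun g : G => (g • x, g • y)) fun g g' hgg' =>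
    h.eq_of_smul_eq_smul hxy (congrArg Prod.fst hgg') (congrArg Prod.snd hgg')

theorem isPretransitive [Nontrivial X] : IsPretransitive G X := by
  refine ⟨fun x x' => ?_⟩
  obtain ⟨y, hy⟩ := exists_ne x
  obtain ⟨y', hy'⟩ := exists_ne x'
  obtain ⟨g, hg, -⟩ := h.exists_smul_eq_and_smul_eq hy.symm hy'.symm
  exact ⟨g, hg⟩

theorem card_stabilizer [Finite X] [Nontrivial X] (x : X) :
    Nat.card (stabilizer G x) = Nat.card X - 1 := by
  obtain ⟨y, hy⟩ := exists_ne x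
  let f : stabilizer G x → {z // z ≠ x} := fun c =>
    ⟨c • y, fun hcy => hy (smul_left_cancel c (hcy.trans c.2.symm))⟩
  have hbij : f.Bijective := by
    refine ⟨fun c c' hcc' => Subtype.ext ?_, fun ⟨z, hz⟩ => ?_⟩
    · exact h.eq_of_smul_eq_smul hy.symm (c.2.trans c'.2.symm) (congrArg Subtype.val hcc')
    · obtain ⟨c, hcx, hcy⟩ := h.exists_smul_eq_and_smul_eq hy.symm hz.symm
      exact ⟨⟨c, hcx⟩, Subtype.ext hcy⟩
  rw [Nat.card_congr (Equiv.ofBijective f hbij), Nat.card_subtype_ne]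

theorem fixedBy_eq_singleton {g : G} (hg : g ≠ 1) {x : X} (hx : g • x = x) :
    fixedBy X g = {x} :=
  Set.eq_singleton_iff_unique_mem.mpr
    ⟨hx, fun _ hy => by_contra fun hyx => hg (h.eq_one_of_smul_eq_self hyx hy hx)⟩

theorem card_fixedPointFree [Finite X] [Nontrivial X] :
    Nat.card {g : G // ∀ x : X, g • x ≠ x} = Nat.card X - 1 := by
  classical
  have := h.finite
  have := h.isPretransitive
  have := Fintype.ofFinite G
  have := Fintype.ofFinite X
  have horbits : Fintype.card (Quotient (orbitRel G X)) = 1 :=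
    Fintype.card_eq_one_iff_nonempty_unique.mpr
      ((pretransitive_iff_unique_quotient_of_nonempty G X).mp inferInstance)
  have hburnside := sum_card_fixedBy_eq_card_orbits_mul_card_group G X
  have hcard : ∀ g : G, Fintype.card (fixedBy X g) + (if ∀ x : X, g • x ≠ x then 1 else 0) =
      1 + if g = 1 then Nat.card X - 1 else 0 := by
    intro g
    obtain rfl | hg := eq_or_ne g 1
    · have := Nat.card_pos (α := X)
      simp only [fixedBy_one_eq_univ, Set.fintypeCard_eq_ncard, Set.ncard_univ, one_smul, ne_eq,
        not_true_eq_false, forall_const, if_true, if_false, add_zero]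
      omega
    by_cases hfree : ∀ x : X, g • x ≠ x
    · simp [hg, hfree]
    · obtain ⟨x, hx⟩ := not_forall_not.mp hfree
      simp [hg, hfree, h.fixedBy_eq_singleton hg hx]
  have hsum := Finset.sum_congr rfl fun g (_ : g ∈ Finset.univ) => hcard g
  rw [Finset.sum_add_distrib, Finset.sum_add_distrib, hburnside, horbits] at hsum
  simp only [one_mul, Finset.sum_boole, Nat.cast_id, Finset.sum_const, Finset.card_univ,
    smul_eq_mul, mul_one, Finset.sum_ite_eq', Finset.mem_univ, if_true] at hsum
  rw [Nat.card_eq_fintype_card, Fintype.card_subtype]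
  omega

omit h in
theorem conj_smul_ne_self {f : G} (hf : ∀ x : X, f • x ≠ x) (c : G) (x : X) :
    (c * f * c⁻¹) • x ≠ x := by
  rw [mul_smul, mul_smul, Ne, ← eq_inv_smul_iff]
  exact hf _

theorem exists_conj_smul_eq {f : G} (hf : ∀ x : X, f • x ≠ x) {x y : X} (hy : y ≠ x) :
    ∃ c : G, (c * f * c⁻¹) • x = y := by
  obtain ⟨c, hcx, hcf⟩ := h.exists_smul_eq_and_smul_eq (hf x).symm hy.symm
  refine ⟨c, ?_⟩
  rw [mul_smul, mul_smul, inv_smul_eq_iff.mpr hcx.symm, hcf]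

theorem exists_conj_eq_of_fixedPointFree [Finite X] [Nontrivial X] {f g : G}
    (hf : ∀ x : X, f • x ≠ x) (hg : ∀ x : X, g • x ≠ x) : ∃ c : G, c * f * c⁻¹ = g := by
  have := h.finite
  obtain ⟨x⟩ := (inferInstance : Nonempty X)
  let eval : {g : G // ∀ x : X, g • x ≠ x} → {y // y ≠ x} := fun g => ⟨g.1 • x, g.2 x⟩
  have hsurj : eval.Surjective := fun ⟨y, hy⟩ => by
    obtain ⟨c, hc⟩ := h.exists_conj_smul_eq hf hy
    exact ⟨⟨c * f * c⁻¹, conj_smul_ne_self hf c⟩, Subtype.ext hc⟩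
  have hinj := (hsurj.bijective_of_nat_card_le <| by
    rw [h.card_fixedPointFree, Nat.card_subtype_ne]).injective
  obtain ⟨c, hc⟩ := h.exists_conj_smul_eq hf (hg x)
  exact ⟨c, congrArg Subtype.val (@hinj ⟨_, conj_smul_ne_self hf c⟩ ⟨g, hg⟩ (Subtype.ext hc))⟩

theorem smul_ne_self_of_orderOf_eq [Finite X] [Nontrivial X] {p : ℕ} (hp : p.Prime)
    (hpX : p ∣ Nat.card X) {g : G} (hg : orderOf g = p) (x : X) : g • x ≠ x := by
  intro hgx
  have hpX' : p ∣ Nat.card X - 1 := by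
    rw [← h.card_stabilizer x, ← hg, ← Subgroup.orderOf_mk (H := stabilizer G x) g hgx]
    exact orderOf_dvd_natCard _
  have := Nat.dvd_sub hpX hpX'
  rw [Nat.sub_sub_self Nat.card_pos, Nat.dvd_one] at this
  exact hp.one_lt.ne' this

theorem exists_orderOf_eq_of_prime_dvd_card [Finite X] [Nontrivial X] {p : ℕ} (hp : p.Prime)
    (hpX : p ∣ Nat.card X) : ∃ g : G, orderOf g = p ∧ ∀ x : X, g • x ≠ x := by
  have := h.finite
  have := h.isPretransitive
  have := Fact.mk hp
  obtain ⟨x⟩ := (inferInstance : Nonempty X)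
  have hpG : p ∣ Nat.card G := by
    rw [← index_stabilizer_of_transitive G x] at hpX
    exact hpX.trans (Subgroup.index_dvd_card _)
  obtain ⟨g, hg⟩ := exists_prime_orderOf_dvd_card' p hpG
  exact ⟨g, hg, h.smul_ne_self_of_orderOf_eq hp hpX hg⟩

theorem isPrimePow_card [Finite X] [Nontrivial X] : IsPrimePow (Nat.card X) := by
  rw [isPrimePow_iff_unique_prime_dvd]
  have hp := Nat.minFac_prime (Finite.one_lt_card (α := X)).ne'
  refine ⟨_, ⟨hp, Nat.minFac_dvd _⟩, fun q ⟨hq, hqX⟩ => ?_⟩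
  obtain ⟨f, rfl, hf⟩ := h.exists_orderOf_eq_of_prime_dvd_card hq hqX
  obtain ⟨g, hg, hg'⟩ := h.exists_orderOf_eq_of_prime_dvd_card hp (Nat.minFac_dvd _)
  obtain ⟨c, hc⟩ := h.exists_conj_eq_of_fixedPointFree hf hg'
  rw [← hg]
  exact SemiconjBy.orderOf_eq c (mul_inv_eq_iff_eq_mul.mp hc)

end IsSharplyTwoTransitive

section Quandle

variable {X : Type*} [Quandle X]

theorem map_act_of_mem_inn {g : Equiv.Perm X} (hg : g ∈ Inn X) (y z : X) :
    g (y ◃ z) = g y ◃ g z := by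
  induction hg using Subgroup.closure_induction generalizing y z with
  | mem _ hg =>
    obtain ⟨x, rfl⟩ := hg
    exact Shelf.self_distrib
  | one => rfl
  | mul g g' _ _ hg hg' =>
    simp only [Equiv.Perm.mul_apply, hg', hg]
  | inv g _ hg =>
    apply g.injective
    rw [hg]
    simp

theorem commute_act'_of_mem_inn {g : Equiv.Perm X} (hg : g ∈ Inn X) {x : X} (hx : g x = x) :
    Commute g (Rack.act' x) :=
  Equiv.ext fun z => by
    simp only [Equiv.Perm.mul_apply, Rack.act'_apply, map_act_of_mem_inn hg, hx]

theorem act'_mem_inn (x : X) : Rack.act' x ∈ Inn X :=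
  Subgroup.subset_closure ⟨x, rfl⟩

namespace IsCyclicType

variable (hc : IsCyclicType X)
include hc

theorem exists_zpow_act'_apply_eq {x y z : X} (hy : y ≠ x) (hz : z ≠ x) :
    ∃ i : ℤ, (Rack.act' x ^ i) y = z :=
  (hc x).1.exists_zpow_eq (mt ((hc x).2 y).mp hy) (mt ((hc x).2 z).mp hz)

theorem eq_one_of_mem_inn {g : Equiv.Perm X} (hg : g ∈ Inn X) {x y : X} (hxy : x ≠ y)
    (hx : g x = x) (hy : g y = y) : g = 1 := by
  ext z
  obtain rfl | hz := eq_or_ne z x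
  · exact hx
  obtain ⟨i, rfl⟩ := hc.exists_zpow_act'_apply_eq hxy.symm hz
  rw [← Equiv.Perm.mul_apply, ((commute_act'_of_mem_inn hg hx).zpow_right i).eq,
    Equiv.Perm.mul_apply, hy, Equiv.Perm.one_apply]

theorem exists_mem_inn_apply_eq (h3 : 3 ≤ Nat.card X) (x x' : X) :
    ∃ g ∈ Inn X, g x = x' := by
  obtain rfl | hxx' := eq_or_ne x x'
  · exact ⟨1, one_mem _, rfl⟩
  have : Finite X := Nat.finite_of_card_ne_zero (by omega)
  obtain ⟨z, hxz, hx'z⟩ := ENat.exists_ne_ne_of_three_le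
    (by rw [ENat.card_eq_coe_natCard]; exact_mod_cast h3) x x'
  obtain ⟨i, hi⟩ := hc.exists_zpow_act'_apply_eq hxz.symm hx'z.symm
  exact ⟨_, zpow_mem (act'_mem_inn z) i, hi⟩

theorem isSharplyTwoTransitive_inn (h3 : 3 ≤ Nat.card X) :
    IsSharplyTwoTransitive (Inn X) X where
  exists_smul_eq_and_smul_eq {x y x' y'} hxy hxy' := by
    obtain ⟨g, hg, rfl⟩ := hc.exists_mem_inn_apply_eq h3 x x'
    obtain ⟨i, hi⟩ := hc.exists_zpow_act'_apply_eq (g.injective.ne hxy).symm hxy'.symm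
    refine ⟨⟨_, mul_mem (zpow_mem (act'_mem_inn (g x)) i) hg⟩, ?_, hi⟩
    exact Equiv.Perm.zpow_apply_eq_self_of_apply_eq_self Quandle.fix i
  eq_one_of_smul_eq_self {g x y} hxy hx hy :=
    Subtype.ext (hc.eq_one_of_mem_inn g.2 hxy hx hy)

end IsCyclicType

end Quandle

abbrev alexanderQuandle {R : Type*} [CommRing R] (α : Rˣ) : Quandle R where
  act x y := (1 - α) * x + α * y
  self_distrib := by intros; ring
  invAct x y := ↑α⁻¹ * (y - (1 - α) * x)
  left_inv x y := by simp only [add_sub_cancel_left, Units.inv_mul_cancel_left]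
  right_inv x y := by simp only [Units.mul_inv_cancel_left, add_sub_cancel]
  fix := by intros; ring

theorem alexanderQuandle_act' {R : Type*} [CommRing R] (α : Rˣ) (x : R) :
    letI := alexanderQuandle α
    Rack.act' x = Equiv.addRight x * MulAction.toPerm α * (Equiv.addRight x)⁻¹ := by
  ext y
  simp only [Rack.act'_apply, Equiv.Perm.mul_apply, Equiv.Perm.inv_def, Equiv.addRight_symm_apply,
    MulAction.toPerm_apply, Equiv.coe_addRight, Units.smul_def, smul_eq_mul]
  show (1 - (α : R)) * x + α * y = _
  ring

theorem Equiv.Perm.isCycle_toPerm_of_mem_zpowers {F : Type*} [Field F] {α : Fˣ}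
    (hα : ∀ u, u ∈ Subgroup.zpowers α) (hα1 : α ≠ 1) :
    (MulAction.toPerm α : Equiv.Perm F).IsCycle := by
  refine ⟨1, by simpa [Units.smul_def] using hα1, fun z hz => ?_⟩
  have hz0 : z ≠ 0 := by rintro rfl; exact hz (smul_zero α)
  obtain ⟨i, hi⟩ := Subgroup.mem_zpowers_iff.mp (hα (Units.mk0 z hz0))
  refine ⟨i, ?_⟩
  rw [← MulAction.toPermHom_apply, ← map_zpow]
  simp [hi]

theorem isCyclicType_alexanderQuandle {F : Type*} [Field F] {α : Fˣ}
    (hα : ∀ u, u ∈ Subgroup.zpowers α) (hα1 : α ≠ 1) :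
    @IsCyclicType F (alexanderQuandle α) := by
  let := alexanderQuandle α
  intro x
  refine ⟨alexanderQuandle_act' α x ▸ (Equiv.Perm.isCycle_toPerm_of_mem_zpowers hα hα1).conj,
    fun y => ?_⟩
  have h1α : (1 - α : F) ≠ 0 := sub_ne_zero.mpr (Ne.symm (Units.val_eq_one.not.mpr hα1))
  show (1 - (α : F)) * x + α * y = y ↔ y = x
  constructor
  · intro h
    have : (1 - (α : F)) * (x - y) = 0 := by linear_combination h
    exact (sub_eq_zero.mp ((mul_eq_zero.mp this).resolve_left h1α)).symm
  · rintro rfl; ring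

theorem exists_isCyclicType_alexanderQuandle (F : Type*) [Field F] [Finite F]
    (h3 : 3 ≤ Nat.card F) : ∃ α : Fˣ, @IsCyclicType F (alexanderQuandle α) := by
  obtain ⟨α, hα⟩ := IsCyclic.exists_generator (α := Fˣ)
  refine ⟨α, isCyclicType_alexanderQuandle hα ?_⟩
  rintro rfl
  have : Nontrivial Fˣ := Finite.one_lt_card_iff_nontrivial.mp (by rw [Nat.card_units]; omega)
  obtain ⟨u, hu⟩ := exists_ne (1 : Fˣ)
  exact hu (by simpa using hα u)

theorem stmt13 (n : ℕ) (h3 : 3 ≤ n) :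
    (∃ (X : Type) (_ : Fintype X) (_ : Quandle X),
      Fintype.card X = n ∧ IsCyclicType X) ↔ IsPrimePow n := by
  constructor
  · rintro ⟨X, _, _, rfl, hc⟩
    rw [← Nat.card_eq_fintype_card] at h3 ⊢
    have : Nontrivial X := Finite.one_lt_card_iff_nontrivial.mp (by omega)
    exact (hc.isSharplyTwoTransitive_inn h3).isPrimePow_card
  · rintro ⟨p, k, hp, hk, rfl⟩
    have := Fact.mk hp.nat_prime
    have hcard : Nat.card (GaloisField p k) = p ^ k := GaloisField.card p k hk.ne'
    obtain ⟨α, hα⟩ := exists_isCyclicType_alexanderQuandle (GaloisField p k) (hcard ▸ h3)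
    let := Fintype.ofFinite (GaloisField p k)
    exact ⟨_, _, alexanderQuandle α, by rw [← Nat.card_eq_fintype_card, hcard], hα⟩
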